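/- arXiv:1905.11009 — 7 statements merged into one kernel-verified Lean document; each statement's English description precedes it below -/
import Mathlib

section
/- Let B ∈ ℝ^{D×K} have full column rank and let M ∈ ℝ^{D×D} be any symmetric generalized inverse of B Bᵀ. Let c₁, …, c_J ∈ ℝ^K be sites. Then for every θ ∈ ℝ^K and all indices k, l: (Bθ − Bc_k)ᵀ M (Bθ − Bc_k) < (Bθ − Bc_l)ᵀ M (Bθ − Bc_l) if and only if ‖θ − c_k‖₂ < ‖θ − c_l‖₂. Hence the map θ ↦ Bθ carries the Euclidean Voronoi cell of c_k in ℝ^K onto the Voronoi cell of Bc_k among the sites Bc₁, …, Bc_J with respect to the distance induced by M. -/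
open Matrix

/-- Euclidean norm of a vector in `ℝ^n`. -/
noncomputable def euclNorm {n : ℕ} (u : Fin n → ℝ) : ℝ := Real.sqrt (u ⬝ᵥ u)

section aux

variable {D K : ℕ}

lemma dp_self_nonneg {K : ℕ} (u : Fin K → ℝ) : 0 ≤ u ⬝ᵥ u :=
  Finset.sum_nonneg fun i _ => mul_self_nonneg _

lemma isUnit_gram {B : Matrix (Fin D) (Fin K) ℝ} (hrank : B.rank = K) :
    IsUnit (Bᵀ * B) := by
  have hr : (Bᵀ * B).rank = K := by rw [Matrix.rank_transpose_mul_self, hrank]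
  rw [← Matrix.mulVec_injective_iff_isUnit]
  have hsurj : Function.Surjective (Bᵀ * B).mulVecLin := by
    rw [← LinearMap.range_eq_top]
    apply Submodule.eq_top_of_finrank_eq
    simpa [Matrix.rank] using hr
  have hinj : Function.Injective (Bᵀ * B).mulVecLin :=
    (LinearMap.injective_iff_surjective).mpr hsurj
  exact hinj

lemma gram_ginv {B : Matrix (Fin D) (Fin K) ℝ} (hrank : B.rank = K)
    {M : Matrix (Fin D) (Fin D) ℝ}
    (hMginv : (B * Bᵀ) * M * (B * Bᵀ) = B * Bᵀ) :
    Bᵀ * M * B = 1 := by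
  have hG := isUnit_gram hrank
  have h : (Bᵀ * B) * ((Bᵀ * M * B) * (Bᵀ * B)) = (Bᵀ * B) * (1 * (Bᵀ * B)) := by
    have := congrArg (fun X => Bᵀ * X * B) hMginv
    simpa only [Matrix.mul_assoc, Matrix.one_mul] using this
  have h1 := hG.mul_left_cancel h
  rw [Matrix.one_mul] at h1
  exact hG.mul_right_cancel (h1.trans (Matrix.one_mul _).symm)

lemma key_quad {B : Matrix (Fin D) (Fin K) ℝ} (hrank : B.rank = K)
    {M : Matrix (Fin D) (Fin D) ℝ}
    (hMginv : (B * Bᵀ) * M * (B * Bᵀ) = B * Bᵀ) (u : Fin K → ℝ) :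
    (B *ᵥ u) ⬝ᵥ (M *ᵥ (B *ᵥ u)) = u ⬝ᵥ u := by
  have h := gram_ginv hrank hMginv
  have e1 : (B *ᵥ u) ᵥ* (M * B) = u ᵥ* (Bᵀ * (M * B)) := by
    rw [← Matrix.vecMul_transpose, Matrix.vecMul_vecMul]
  rw [Matrix.mulVec_mulVec, Matrix.dotProduct_mulVec, e1, ← Matrix.mul_assoc, h,
    Matrix.vecMul_one]

end aux

/-- If `B` has full column rank and `M` is a symmetric generalized
inverse of `B * Bᵀ`, then for sites `c₁, …, c_J ∈ ℝ^K`, the `M`-distance comparison of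
`Bθ` to `Bc_k` versus `Bc_l` agrees with the Euclidean comparison of `θ` to `c_k` versus
`c_l`; hence `θ ↦ Bθ` carries the Euclidean Voronoi cell of `c_k` onto the Voronoi cell
of `Bc_k` (within the column space of `B`) for the distance induced by `M`. -/
theorem vlad_voronoi_correspondence
    (D K J : ℕ) (B : Matrix (Fin D) (Fin K) ℝ)
    (hrank : B.rank = K)
    (M : Matrix (Fin D) (Fin D) ℝ)
    (hMsymm : Mᵀ = M)
    (hMginv : (B * Bᵀ) * M * (B * Bᵀ) = B * Bᵀ)
    (c : Fin J → (Fin K → ℝ)) :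
    (∀ (θ : Fin K → ℝ) (k l : Fin J),
        (B *ᵥ θ - B *ᵥ c k) ⬝ᵥ (M *ᵥ (B *ᵥ θ - B *ᵥ c k)) <
          (B *ᵥ θ - B *ᵥ c l) ⬝ᵥ (M *ᵥ (B *ᵥ θ - B *ᵥ c l)) ↔
        euclNorm (θ - c k) < euclNorm (θ - c l)) ∧
      ∀ k : Fin J,
        (fun θ : Fin K → ℝ => B *ᵥ θ) ''
            {θ : Fin K → ℝ | ∀ l : Fin J, l ≠ k → euclNorm (θ - c k) < euclNorm (θ - c l)} =
          {x : Fin D → ℝ | (∃ θ : Fin K → ℝ, x = B *ᵥ θ) ∧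
            ∀ l : Fin J, l ≠ k →
              (x - B *ᵥ c k) ⬝ᵥ (M *ᵥ (x - B *ᵥ c k)) <
                (x - B *ᵥ c l) ⬝ᵥ (M *ᵥ (x - B *ᵥ c l))} := by
  have hquad : ∀ (θ : Fin K → ℝ) (k : Fin J),
      (B *ᵥ θ - B *ᵥ c k) ⬝ᵥ (M *ᵥ (B *ᵥ θ - B *ᵥ c k)) = (θ - c k) ⬝ᵥ (θ - c k) := by
    intro θ k
    rw [← Matrix.mulVec_sub]
    exact key_quad hrank hMginv _
  have hiff : ∀ (θ : Fin K → ℝ) (k l : Fin J),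
      (B *ᵥ θ - B *ᵥ c k) ⬝ᵥ (M *ᵥ (B *ᵥ θ - B *ᵥ c k)) <
        (B *ᵥ θ - B *ᵥ c l) ⬝ᵥ (M *ᵥ (B *ᵥ θ - B *ᵥ c l)) ↔
      euclNorm (θ - c k) < euclNorm (θ - c l) := by
    intro θ k l
    rw [hquad, hquad]
    unfold euclNorm
    constructor
    · intro h
      exact Real.sqrt_lt_sqrt (dp_self_nonneg _) h
    · intro h
      exact (Real.sqrt_lt_sqrt_iff (dp_self_nonneg (θ - c k))).mp h
  refine ⟨hiff, fun k => ?_⟩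
  ext x
  constructor
  · rintro ⟨θ, hθ, rfl⟩
    refine ⟨⟨θ, rfl⟩, fun l hl => ?_⟩
    exact (hiff θ k l).mpr (hθ l hl)
  · rintro ⟨⟨θ, rfl⟩, h⟩
    exact ⟨θ, fun l hl => (hiff θ k l).mp (h l hl), rfl⟩
end

section
/- Let B ∈ ℝ^{D×K} have full column rank, let P = I_K − (1/K)𝟙_K𝟙_Kᵀ, and let M ∈ ℝ^{D×D} be any symmetric generalized inverse of B P Bᵀ (i.e., M symmetric and (B P Bᵀ) M (B P Bᵀ) = B P Bᵀ). Then P Bᵀ M B P = P. -/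
open Matrix

private lemma mulVecLin_inj {D K : ℕ} (B : Matrix (Fin D) (Fin K) ℝ)
    (hrank : B.rank = K) : Function.Injective B.mulVecLin := by
  rw [← LinearMap.ker_eq_bot]
  have h := LinearMap.finrank_range_add_finrank_ker B.mulVecLin
  rw [Module.finrank_fintype_fun_eq_card, Fintype.card_fin] at h
  have : Module.finrank ℝ (LinearMap.ker B.mulVecLin) = 0 := by
    have : B.rank = Module.finrank ℝ (LinearMap.range B.mulVecLin) := rfl
    omega
  exact Submodule.finrank_eq_zero.mp this

private lemma cancelB {D K n : ℕ} (B : Matrix (Fin D) (Fin K) ℝ)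
    (hrank : B.rank = K) (X Y : Matrix (Fin K) (Fin n) ℝ)
    (h : B * X = B * Y) : X = Y := by
  have hinj := mulVecLin_inj B hrank
  ext i j
  have hcol : B.mulVecLin (fun k => X k j) = B.mulVecLin (fun k => Y k j) := by
    funext i'
    have := congrFun (congrFun h i') j
    simpa [Matrix.mul_apply, Matrix.mulVecLin_apply, Matrix.mulVec, dotProduct] using this
  exact congrFun (hinj hcol) i

/-- If `B` has full column rank, `P = 1 − (1/K)𝟙𝟙ᵀ` is the centering
matrix, and `M` is any symmetric generalized inverse of `B * P * Bᵀ`, then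
`P * Bᵀ * M * B * P = P`. -/
theorem vlad_centered_ginv_identity
    (D K : ℕ) (B : Matrix (Fin D) (Fin K) ℝ)
    (hrank : B.rank = K)
    (P : Matrix (Fin K) (Fin K) ℝ)
    (hP : P = 1 - (K : ℝ)⁻¹ • vecMulVec (fun _ => (1 : ℝ)) (fun _ => (1 : ℝ)))
    (M : Matrix (Fin D) (Fin D) ℝ)
    (hMsymm : Mᵀ = M)
    (hMginv : (B * P * Bᵀ) * M * (B * P * Bᵀ) = B * P * Bᵀ) :
    P * Bᵀ * M * B * P = P := by
  have hPT : Pᵀ = P := by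
    subst hP
    ext i j
    simp [Matrix.transpose_apply, Matrix.one_apply, vecMulVec_apply, eq_comm]
  set X : Matrix (Fin K) (Fin K) ℝ := P * Bᵀ * M * B * P with hX
  have h1 : B * (X * Bᵀ) = B * (P * Bᵀ) := by
    rw [hX]
    calc B * (P * Bᵀ * M * B * P * Bᵀ) = (B * P * Bᵀ) * M * (B * P * Bᵀ) := by
          simp only [Matrix.mul_assoc]
      _ = B * (P * Bᵀ) := by rw [hMginv, Matrix.mul_assoc]
  have h2 : X * Bᵀ = P * Bᵀ := cancelB B hrank _ _ h1
  have h3 : B * Xᵀ = B * Pᵀ := by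
    have := congrArg Matrix.transpose h2
    simpa [Matrix.transpose_mul] using this
  have h4 : Xᵀ = Pᵀ := cancelB B hrank _ _ h3
  have hXT : Xᵀ = X := by
    rw [hX]
    simp only [Matrix.transpose_mul, Matrix.transpose_transpose, hPT, hMsymm, Matrix.mul_assoc]
  rw [← hXT, h4, hPT]
end

section
/- Let B ∈ ℝ^{D×K} have full column rank, P = I_K − (1/K)𝟙_K𝟙_Kᵀ, δ > 0, and Σ = δ·B P Bᵀ. Let M ∈ ℝ^{D×D} be any symmetric generalized inverse of Σ. Then for all θ, v ∈ ℝ^K: (B P θ − B P v)ᵀ M (B P θ − B P v) = (1/δ)·‖Pθ − Pv‖₂². Hence clustering the centered points B P θ_i in the ‖·‖_{Σ†} metric is equivalent (up to the positive factor 1/δ) to standard Euclidean K-means clustering of the centered weights P θ_i on the simplex. -/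
open Matrix

/-- If `B` has full column rank, `P` is the centering matrix,
`Sig = δ B P Bᵀ` with `δ > 0`, and `M` is any symmetric generalized inverse of `Sig`,
then `(BPθ − BPv)ᵀ M (BPθ − BPv) = (1/δ) ‖Pθ − Pv‖₂²` for all `θ, v ∈ ℝ^K`. -/
theorem vlad_scaled_kmeans_reduction
    (D K : ℕ) (B : Matrix (Fin D) (Fin K) ℝ)
    (hrank : B.rank = K)
    (P : Matrix (Fin K) (Fin K) ℝ)
    (hP : P = 1 - (K : ℝ)⁻¹ • vecMulVec (fun _ => (1 : ℝ)) (fun _ => (1 : ℝ)))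
    (δ : ℝ) (hδ : 0 < δ)
    (Sig : Matrix (Fin D) (Fin D) ℝ)
    (hSig : Sig = δ • (B * P * Bᵀ))
    (M : Matrix (Fin D) (Fin D) ℝ)
    (hMsymm : Mᵀ = M)
    (hMginv : Sig * M * Sig = Sig) :
    ∀ θ v : Fin K → ℝ,
      ((B * P) *ᵥ θ - (B * P) *ᵥ v) ⬝ᵥ (M *ᵥ ((B * P) *ᵥ θ - (B * P) *ᵥ v)) =
        (1 / δ) * ((P *ᵥ θ - P *ᵥ v) ⬝ᵥ (P *ᵥ θ - P *ᵥ v)) := by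
  intro θ v
  -- P is symmetric
  have hPsymm : Pᵀ = P := by
    subst hP
    simp [transpose_sub, transpose_smul, vecMulVec_eq (Fin 1), Matrix.transpose_mul]
  -- P is idempotent
  have hPP : P * P = P := by
    rcases Nat.eq_zero_or_pos K with hK | hK
    · subst hK; exact Subsingleton.elim _ _
    · have hKne : (K : ℝ) ≠ 0 := Nat.cast_ne_zero.mpr hK.ne'
      subst hP
      have hJJ : (vecMulVec (fun _ => (1 : ℝ)) (fun _ => (1 : ℝ)) :
          Matrix (Fin K) (Fin K) ℝ) * vecMulVec (fun _ => (1 : ℝ)) (fun _ => (1 : ℝ))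
          = (K : ℝ) • vecMulVec (fun _ => (1 : ℝ)) (fun _ => (1 : ℝ)) := by
        ext i j
        simp [vecMulVec_apply, Matrix.mul_apply, Matrix.smul_apply, Finset.sum_const,
          Finset.card_univ]
      rw [sub_mul, mul_sub, mul_sub, one_mul, mul_one, Matrix.smul_mul]
      simp only [Matrix.mul_smul, Matrix.smul_mul, Matrix.one_mul, hJJ, smul_smul]
      rw [inv_mul_cancel₀ hKne, mul_one]
      abel
  -- BᵀB is invertible
  have hrk : (Bᵀ * B).rank = K := by rw [rank_transpose_mul_self]; exact hrank
  have hUnit : IsUnit (Bᵀ * B) := by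
    rw [← Matrix.mulVec_surjective_iff_isUnit]
    have htop : LinearMap.range (Bᵀ * B).mulVecLin = ⊤ := by
      apply Submodule.eq_top_of_finrank_eq
      rw [← Matrix.rank, hrk, Module.finrank_pi]
      simp
    intro y
    have := htop ▸ Submodule.mem_top (x := y) (R := ℝ)
    obtain ⟨x, hx⟩ := this
    exact ⟨x, hx⟩
  have hdet : IsUnit (Bᵀ * B).det := (Matrix.isUnit_iff_isUnit_det _).mp hUnit
  set L : Matrix (Fin K) (Fin D) ℝ := (Bᵀ * B)⁻¹ * Bᵀ with hLdef
  have hLB : L * B = 1 := by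
    rw [hLdef, Matrix.mul_assoc]
    exact Matrix.nonsing_inv_mul _ hdet
  have hBLt : Bᵀ * Lᵀ = 1 := by
    have := congrArg Matrix.transpose hLB
    simpa [Matrix.transpose_mul] using this
  -- key identity: P Bᵀ M B P = δ⁻¹ • P
  have hδne : δ ≠ 0 := ne_of_gt hδ
  have key : P * Bᵀ * M * (B * P) = δ⁻¹ • P := by
    have h1 : L * (Sig * M * Sig) * Lᵀ = L * Sig * Lᵀ := by rw [hMginv]
    have hLS : L * Sig = δ • (P * Bᵀ) := by
      rw [hSig, Matrix.mul_smul, ← Matrix.mul_assoc, ← Matrix.mul_assoc, hLB, Matrix.one_mul]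
    have hSLt : Sig * Lᵀ = δ • (B * P) := by
      rw [hSig, Matrix.smul_mul, Matrix.mul_assoc, hBLt, Matrix.mul_one]
    have hLSLt : L * Sig * Lᵀ = δ • P := by
      rw [hLS, Matrix.smul_mul, Matrix.mul_assoc, hBLt, Matrix.mul_one]
    have h2 : L * (Sig * M * Sig) * Lᵀ = (δ * δ) • (P * Bᵀ * M * (B * P)) := by
      calc L * (Sig * M * Sig) * Lᵀ = (L * Sig) * M * (Sig * Lᵀ) := by
            simp only [Matrix.mul_assoc]
        _ = (δ • (P * Bᵀ)) * M * (δ • (B * P)) := by rw [hLS, hSLt]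
        _ = (δ * δ) • (P * Bᵀ * M * (B * P)) := by
            rw [Matrix.smul_mul, Matrix.smul_mul, Matrix.mul_smul, smul_smul]
    have h3 : (δ * δ) • (P * Bᵀ * M * (B * P)) = δ • P := by rw [← h2, h1, hLSLt]
    have hne : δ * δ ≠ 0 := mul_ne_zero hδne hδne
    apply smul_right_injective (Matrix (Fin K) (Fin K) ℝ) hne
    show (δ * δ) • (P * Bᵀ * M * (B * P)) = (δ * δ) • (δ⁻¹ • P)
    rw [h3, smul_smul]
    congr 1
    field_simp
  -- now compute
  set u : Fin K → ℝ := θ - v with hu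
  have hBPu : (B * P) *ᵥ θ - (B * P) *ᵥ v = (B * P) *ᵥ u := by
    rw [hu, Matrix.mulVec_sub]
  have hPu : P *ᵥ θ - P *ᵥ v = P *ᵥ u := by rw [hu, Matrix.mulVec_sub]
  rw [hBPu, hPu]
  have lhs_eq : ((B * P) *ᵥ u) ⬝ᵥ (M *ᵥ ((B * P) *ᵥ u))
      = u ⬝ᵥ ((P * Bᵀ * M * (B * P)) *ᵥ u) := by
    rw [Matrix.mulVec_mulVec, Matrix.dotProduct_mulVec, ← Matrix.vecMul_transpose,
      Matrix.vecMul_vecMul, Matrix.dotProduct_mulVec u]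
    rw [Matrix.transpose_mul, hPsymm, ← Matrix.mul_assoc]
  have rhs_eq : (P *ᵥ u) ⬝ᵥ (P *ᵥ u) = u ⬝ᵥ (P *ᵥ u) := by
    rw [Matrix.dotProduct_mulVec, ← Matrix.vecMul_transpose, Matrix.vecMul_vecMul, hPsymm,
      hPP, ← Matrix.mulVec_transpose, hPsymm]
    exact dotProduct_comm _ _
  rw [lhs_eq, rhs_eq, key, Matrix.smul_mulVec, dotProduct_smul, smul_eq_mul, one_div]
end

section
/- Let W ∈ ℝ^{D×(K−1)} have orthonormal columns (Wᵀ W = I_{K−1}), let Λ ∈ ℝ^{(K−1)×(K−1)} be a diagonal matrix with strictly positive diagonal entries, let n > 0, and set G = (1/n)·W Λ² Wᵀ. Let M be any symmetric generalized inverse of G. Then for all u, η ∈ ℝ^{K−1}: (W Λ (u − η))ᵀ M (W Λ (u − η)) = n·‖u − η‖₂². Hence scaled (Mahalanobis) K-means in ℝ^D on points of the form WΛu_i is equivalent to standard Euclidean K-means on the low-dimensional coordinates u_i ∈ ℝ^{K−1}. -/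
open Matrix

/-- If `W ∈ ℝ^{D×(K−1)}` has orthonormal columns, `Λ` is diagonal with
strictly positive diagonal, `n > 0`, `G = (1/n) W Λ² Wᵀ`, and `M` is any symmetric
generalized inverse of `G`, then `(WΛ(u−η))ᵀ M (WΛ(u−η)) = n ‖u − η‖₂²` for all
`u, η ∈ ℝ^{K−1}`: scaled K-means on the points `WΛu_i` reduces to Euclidean K-means on
the low-dimensional coordinates. -/
theorem vlad_dimension_reduction
    (D K : ℕ)
    (W : Matrix (Fin D) (Fin (K - 1)) ℝ)
    (hW : Wᵀ * W = (1 : Matrix (Fin (K - 1)) (Fin (K - 1)) ℝ))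
    (d : Fin (K - 1) → ℝ) (hd : ∀ i, 0 < d i)
    (Λ : Matrix (Fin (K - 1)) (Fin (K - 1)) ℝ) (hΛ : Λ = diagonal d)
    (n : ℕ) (hn : 0 < n)
    (G : Matrix (Fin D) (Fin D) ℝ)
    (hG : G = ((n : ℝ)⁻¹) • (W * (Λ * Λ) * Wᵀ))
    (M : Matrix (Fin D) (Fin D) ℝ)
    (hMsymm : Mᵀ = M)
    (hMginv : G * M * G = G) :
    ∀ u η : Fin (K - 1) → ℝ,
      ((W * Λ) *ᵥ (u - η)) ⬝ᵥ (M *ᵥ ((W * Λ) *ᵥ (u - η))) =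
        (n : ℝ) * ((u - η) ⬝ᵥ (u - η)) := by
  have hn0 : (n : ℝ) ≠ 0 := Nat.cast_ne_zero.mpr hn.ne'
  set Λi : Matrix (Fin (K - 1)) (Fin (K - 1)) ℝ := diagonal (fun i => (d i)⁻¹) with hΛi
  have hΛΛi : Λ * Λi = 1 := by
    rw [hΛ, hΛi, diagonal_mul_diagonal]
    have : (fun i => d i * (d i)⁻¹) = fun _ => (1 : ℝ) :=
      funext fun i => mul_inv_cancel₀ (hd i).ne'
    rw [this, diagonal_one]
  have hΛiΛ : Λi * Λ = 1 := by
    rw [hΛ, hΛi, diagonal_mul_diagonal]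
    have : (fun i => (d i)⁻¹ * d i) = fun _ => (1 : ℝ) :=
      funext fun i => inv_mul_cancel₀ (hd i).ne'
    rw [this, diagonal_one]
  have key : Λ * (Wᵀ * M * W) * Λ = (n : ℝ) • 1 := by
    have h1 : Wᵀ * G * W = ((n : ℝ)⁻¹) • (Λ * Λ) := by
      rw [hG, Matrix.mul_smul, Matrix.smul_mul]
      congr 1
      calc Wᵀ * (W * (Λ * Λ) * Wᵀ) * W
          = (Wᵀ * W) * (Λ * Λ) * (Wᵀ * W) := by simp only [Matrix.mul_assoc]
        _ = Λ * Λ := by rw [hW, Matrix.one_mul, Matrix.mul_one]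
    have h2 : Wᵀ * (G * M * G) * W
        = ((n : ℝ)⁻¹ * (n : ℝ)⁻¹) • ((Λ * Λ) * (Wᵀ * M * W) * (Λ * Λ)) := by
      rw [hG]
      simp only [Matrix.smul_mul, Matrix.mul_smul, smul_smul]
      congr 1
      calc Wᵀ * (W * (Λ * Λ) * Wᵀ * M * (W * (Λ * Λ) * Wᵀ)) * W
          = (Wᵀ * W) * ((Λ * Λ) * ((Wᵀ * M * W) * ((Λ * Λ) * (Wᵀ * W)))) := by
            simp only [Matrix.mul_assoc]
        _ = (Λ * Λ) * (Wᵀ * M * W) * (Λ * Λ) := by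
            rw [hW, Matrix.mul_one, Matrix.one_mul]; simp only [Matrix.mul_assoc]
    have h3 : ((n : ℝ)⁻¹ * (n : ℝ)⁻¹) • ((Λ * Λ) * (Wᵀ * M * W) * (Λ * Λ))
        = ((n : ℝ)⁻¹) • (Λ * Λ) := by rw [← h2, hMginv, h1]
    have h4 : (Λ * Λ) * (Wᵀ * M * W) * (Λ * Λ) = (n : ℝ) • (Λ * Λ) := by
      have h := congrArg (fun A => (((n : ℝ) * (n : ℝ)) • A)) h3
      simp only [smul_smul] at h
      rw [show ((n : ℝ) * n) * ((n : ℝ)⁻¹ * (n : ℝ)⁻¹) = 1 by field_simp,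
        show ((n : ℝ) * n) * (n : ℝ)⁻¹ = n by field_simp, one_smul] at h
      exact h
    have e : Λ * (Wᵀ * M * W) * Λ
        = Λi * ((Λ * Λ) * (Wᵀ * M * W) * (Λ * Λ)) * Λi := by
      simp only [← Matrix.mul_assoc]
      rw [hΛiΛ, Matrix.one_mul, Matrix.mul_assoc (Λ * Wᵀ * M * W * Λ) Λ Λi,
        hΛΛi, Matrix.mul_one]
    rw [e, h4, Matrix.mul_smul, Matrix.smul_mul]
    congr 1
    rw [← Matrix.mul_assoc Λi Λ Λ, hΛiΛ, Matrix.one_mul, hΛΛi]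
  have lem : ∀ (A : Matrix (Fin D) (Fin (K - 1)) ℝ) (x : Fin (K - 1) → ℝ),
      (A *ᵥ x) ⬝ᵥ (M *ᵥ (A *ᵥ x)) = x ⬝ᵥ ((Aᵀ * M * A) *ᵥ x) := by
    intro A x
    rw [← Matrix.mulVec_mulVec, ← Matrix.mulVec_mulVec, Matrix.dotProduct_mulVec x,
      Matrix.vecMul_transpose]
  intro u η
  have hΛT : Λᵀ = Λ := by rw [hΛ, diagonal_transpose]
  rw [lem (W * Λ) (u - η)]
  rw [show (W * Λ)ᵀ * M * (W * Λ) = Λ * (Wᵀ * M * W) * Λ by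
    rw [Matrix.transpose_mul, hΛT]; simp only [Matrix.mul_assoc]]
  rw [key, Matrix.smul_mulVec, Matrix.one_mulVec, dotProduct_smul, smul_eq_mul]
end

section
/- Let K ≥ 2 and let μ be a finite Borel measure on ℝ^K, concentrated on the hyperplane {θ ∈ ℝ^K : θ₁ + ⋯ + θ_K = 1}, with finite first moment, and invariant under every permutation of the coordinates that fixes the first coordinate. Let V₁ = {θ ∈ ℝ^K : θ₁ > θ_l for all l ≠ 1} and assume μ(V₁) > 0. Then the barycenter b = μ(V₁)⁻¹ ∫_{V₁} θ dμ(θ) lies on the line through the center (1/K)𝟙_K and the vertex e₁ of the standard simplex: there exists t ∈ ℝ such that b = (1/K)𝟙_K + t·(e₁ − (1/K)𝟙_K). -/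
open MeasureTheory

/-- Let `μ` be a finite Borel measure on `ℝ^K` (`K ≥ 2`), concentrated
on `{θ : ∑ θᵢ = 1}`, with finite first moment, invariant under every coordinate
permutation fixing the first coordinate. If the Voronoi cell
`V₁ = {θ : θ₁ > θ_l ∀ l ≠ 1}` has positive measure, then its barycenter lies on the line
through the simplex center `(1/K)𝟙` and the vertex `e₁`. -/
theorem voronoi_barycenter_on_center_vertex_line
    (K : ℕ) (hK : 2 ≤ K)
    (μ : Measure (Fin K → ℝ)) [IsFiniteMeasure μ]
    (hconc : μ {θ : Fin K → ℝ | ∑ i, θ i = 1}ᶜ = 0)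
    (hmom : ∀ i : Fin K, Integrable (fun θ : Fin K → ℝ => θ i) μ)
    (hinv : ∀ σ : Equiv.Perm (Fin K), σ ⟨0, by omega⟩ = ⟨0, by omega⟩ →
      Measure.map (fun θ : Fin K → ℝ => θ ∘ σ) μ = μ) :
    let i0 : Fin K := ⟨0, by omega⟩
    let V₁ : Set (Fin K → ℝ) := {θ | ∀ l : Fin K, l ≠ i0 → θ l < θ i0}
    0 < μ V₁ →
      ∃ t : ℝ,
        (μ V₁).toReal⁻¹ • (∫ θ in V₁, θ ∂μ) =
          (fun _ => (K : ℝ)⁻¹) +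
            t • (Pi.single i0 (1 : ℝ) - fun _ => (K : ℝ)⁻¹) := by
  intro i0 V₁ hpos
  set m : ℝ := (μ V₁).toReal with hm
  have hmpos : 0 < m := ENNReal.toReal_pos hpos.ne' (measure_ne_top μ V₁)
  have hV₁meas : MeasurableSet V₁ := by
    have : V₁ = ⋂ l ∈ {l : Fin K | l ≠ i0}, {θ : Fin K → ℝ | θ l < θ i0} := by
      ext θ; simp [V₁, Set.mem_iInter]
    rw [this]
    exact MeasurableSet.biInter (Set.to_countable _) fun l _ =>
      measurableSet_lt (measurable_pi_apply l) (measurable_pi_apply i0)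
  -- component evaluation of the vector integral
  have happly : ∀ j, (∫ θ in V₁, θ ∂μ) j = ∫ θ in V₁, θ j ∂μ := by
    intro j
    have hrep : (fun θ : Fin K → ℝ => θ) =
        fun θ => ∑ i, (θ i) • Pi.single i (1 : ℝ) := by
      funext θ; ext k
      simp [Pi.single_apply, Finset.sum_apply, eq_comm]
    rw [hrep, integral_finset_sum _ (fun i _ => ((hmom i).restrict).smul_const _)]
    simp only [integral_smul_const]
    simp [Finset.sum_apply, Pi.single_apply, eq_comm]
  -- symmetry: components away from i0 agree
  have hswap : ∀ i j : Fin K, i ≠ i0 → j ≠ i0 →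
      ∫ θ in V₁, θ i ∂μ = ∫ θ in V₁, θ j ∂μ := by
    intro i j hi hj
    have hσ : (Equiv.swap i j) i0 = i0 :=
      Equiv.swap_apply_of_ne_of_ne (Ne.symm hi) (Ne.symm hj)
    have hmap := hinv (Equiv.swap i j) hσ
    set σ := Equiv.swap i j with hσdef
    set T : (Fin K → ℝ) → (Fin K → ℝ) := fun θ => θ ∘ σ with hT
    have hTmeas : Measurable T :=
      measurable_pi_lambda _ fun l => measurable_pi_apply _
    have hpre : T ⁻¹' V₁ = V₁ := by
      ext θ
      simp only [Set.mem_preimage, V₁, Set.mem_setOf_eq, hT, Function.comp]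
      constructor
      · intro h l hl
        have hne : σ.symm l ≠ i0 := by
          intro hc
          apply hl
          have := congrArg σ hc
          rwa [Equiv.apply_symm_apply, hσ] at this
        have := h (σ.symm l) hne
        rwa [Equiv.apply_symm_apply, hσ] at this
      · intro h l hl
        have hne : σ l ≠ i0 := by
          intro hc
          apply hl
          have := congrArg σ.symm hc
          rwa [Equiv.symm_apply_apply, ← hσ, Equiv.symm_apply_apply] at this
        have := h (σ l) hne
        rw [hσ]; exact this
    calc ∫ θ in V₁, θ i ∂μ = ∫ θ in V₁, θ i ∂(Measure.map T μ) := by rw [hmap]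
      _ = ∫ θ in T ⁻¹' V₁, (T θ) i ∂μ := by
          rw [setIntegral_map hV₁meas ((measurable_pi_apply i).aestronglyMeasurable)
            hTmeas.aemeasurable]
      _ = ∫ θ in V₁, θ j ∂μ := by
          rw [hpre]
          refine integral_congr_ae (Filter.Eventually.of_forall fun θ => ?_)
          simp [hT, hσdef, Equiv.swap_apply_left]
  -- sum of components equals the mass
  have hsum : ∑ i, ∫ θ in V₁, θ i ∂μ = m := by
    rw [← integral_finset_sum _ (fun i _ => (hmom i).restrict)]
    have hae : ∀ᵐ θ ∂(μ.restrict V₁), ∑ i, θ i = 1 := by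
      refine ae_restrict_of_ae ?_
      rw [ae_iff]
      exact measure_mono_null (fun θ h => h) hconc
    calc ∫ θ in V₁, ∑ i, θ i ∂μ = ∫ _ in V₁, (1 : ℝ) ∂μ := integral_congr_ae hae
      _ = m := by simp [hm]; rfl
  -- set up the common value of the non-i0 components
  set a : ℝ := ∫ θ in V₁, θ i0 ∂μ with ha
  have j1ne : (⟨1, by omega⟩ : Fin K) ≠ i0 := by
    simp only [i0, ne_eq, Fin.mk.injEq]; omega
  set c : ℝ := ∫ θ in V₁, θ (⟨1, by omega⟩ : Fin K) ∂μ with hc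
  have hcomm : ∀ l : Fin K, l ≠ i0 → ∫ θ in V₁, θ l ∂μ = c :=
    fun l hl => hswap l _ hl j1ne
  have hcard : (Finset.univ.erase i0).card = K - 1 := by
    rw [Finset.card_erase_of_mem (Finset.mem_univ _), Finset.card_univ, Fintype.card_fin]
  have hsum' : a + ((K : ℝ) - 1) * c = m := by
    have : ∑ i, ∫ θ in V₁, θ i ∂μ
        = a + ∑ i ∈ Finset.univ.erase i0, ∫ θ in V₁, θ i ∂μ := by
      rw [← Finset.add_sum_erase _ _ (Finset.mem_univ i0)]
    rw [this] at hsum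
    rw [Finset.sum_congr rfl (fun i hi => hcomm i (Finset.ne_of_mem_erase hi)),
      Finset.sum_const, hcard, nsmul_eq_mul] at hsum
    have : ((K - 1 : ℕ) : ℝ) = (K : ℝ) - 1 := by
      push_cast [Nat.cast_sub (by omega : 1 ≤ K)]; ring
    rw [this] at hsum
    exact hsum
  have hKpos : (0:ℝ) < (K : ℝ) := by positivity
  have hK1 : (K : ℝ) - 1 ≠ 0 := by
    have : (2:ℝ) ≤ (K : ℝ) := by exact_mod_cast hK
    linarith
  refine ⟨((K : ℝ) * (m⁻¹ * a) - 1) / ((K : ℝ) - 1), ?_⟩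
  funext l
  simp only [Pi.smul_apply, Pi.add_apply, Pi.sub_apply, smul_eq_mul, happly]
  by_cases hl : l = i0
  · subst hl
    rw [← ha, Pi.single_eq_same]
    field_simp
    ring
  · rw [hcomm l hl, Pi.single_eq_of_ne hl]
    have hcval : c = (m - a) / ((K : ℝ) - 1) := by
      field_simp at hsum' ⊢
      linarith
    rw [hcval]
    field_simp
    ring
end

section
/- Let K ≥ 2, D ≥ 1, let C ∈ ℝ^{D×K} have full column rank, and μ ∈ ℝ^D. For γ ∈ ℝ define B(γ) = γ(C − μ𝟙_Kᵀ) + μ𝟙_Kᵀ, and for α > 0 define S(α) = (1/(K(Kα+1)))·(I_K − (1/K)𝟙_K𝟙_Kᵀ). Then for any γ₁, γ₂ ∈ ℝ and α₁, α₂ > 0: B(γ₁)S(α₁)B(γ₁)ᵀ = B(γ₂)S(α₂)B(γ₂)ᵀ if and only if γ₁²/(K(Kα₁+1)) = γ₂²/(K(Kα₂+1)). Hence identifiability of the pair (γ, α) from the second-moment matrix B(γ)S(α)B(γ)ᵀ reduces to the invertibility of the scalar function φ(α) = γ(α)²/(K(Kα+1)). -/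
open Matrix

/-- For `C ∈ ℝ^{D×K}` of full column rank, `μ ∈ ℝ^D`,
`B(γ) = γ(C − μ𝟙ᵀ) + μ𝟙ᵀ` and `S(α) = (1/(K(Kα+1)))(I − (1/K)𝟙𝟙ᵀ)`, the second-moment
matrices `B(γ₁)S(α₁)B(γ₁)ᵀ` and `B(γ₂)S(α₂)B(γ₂)ᵀ` coincide if and only if
`γ₁²/(K(Kα₁+1)) = γ₂²/(K(Kα₂+1))`: identifiability reduces to invertibility of the
scalar function `φ(α) = γ(α)²/(K(Kα+1))`. -/
theorem concentration_identifiability_reduction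
    (K D : ℕ) (hK : 2 ≤ K) (hD : 1 ≤ D)
    (C : Matrix (Fin D) (Fin K) ℝ) (hrank : C.rank = K)
    (μ : Fin D → ℝ)
    (B : ℝ → Matrix (Fin D) (Fin K) ℝ)
    (hB : ∀ γ : ℝ, B γ = γ • (C - vecMulVec μ (fun _ => (1 : ℝ)))
        + vecMulVec μ (fun _ => (1 : ℝ)))
    (S : ℝ → Matrix (Fin K) (Fin K) ℝ)
    (hS : ∀ α : ℝ, S α = (1 / ((K : ℝ) * ((K : ℝ) * α + 1))) •
        ((1 : Matrix (Fin K) (Fin K) ℝ)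
          - (K : ℝ)⁻¹ • vecMulVec (fun _ => (1 : ℝ)) (fun _ => (1 : ℝ)))) :
    ∀ (γ₁ γ₂ α₁ α₂ : ℝ), 0 < α₁ → 0 < α₂ →
      (B γ₁ * S α₁ * (B γ₁)ᵀ = B γ₂ * S α₂ * (B γ₂)ᵀ ↔
        γ₁ ^ 2 / ((K : ℝ) * ((K : ℝ) * α₁ + 1)) =
          γ₂ ^ 2 / ((K : ℝ) * ((K : ℝ) * α₂ + 1))) := by
  have hKpos : (0 : ℝ) < (K : ℝ) := by exact_mod_cast lt_of_lt_of_le (by norm_num) hK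
  have hK0 : (K : ℝ) ≠ 0 := ne_of_gt hKpos
  set u : Fin K → ℝ := fun _ => (1 : ℝ) with hu
  set J : Matrix (Fin K) (Fin K) ℝ := vecMulVec u u with hJ
  set M : Matrix (Fin D) (Fin K) ℝ := vecMulVec μ u with hM
  set P : Matrix (Fin K) (Fin K) ℝ := (1 : Matrix (Fin K) (Fin K) ℝ) - (K : ℝ)⁻¹ • J with hP
  -- M * J = K • M
  have hMJ : M * J = (K : ℝ) • M := by
    ext i j
    simp [hM, hJ, hu, mul_apply, vecMulVec_apply, Finset.sum_const, mul_comm]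
  have hMP : M * P = 0 := by
    rw [hP, Matrix.mul_sub, Matrix.mul_one, Matrix.mul_smul, hMJ, smul_smul,
      inv_mul_cancel₀ hK0, one_smul, sub_self]
  have hJT : Jᵀ = J := by
    ext i j; simp [hJ, vecMulVec_apply, hu]
  have hPT : Pᵀ = P := by
    rw [hP, Matrix.transpose_sub, Matrix.transpose_one, Matrix.transpose_smul, hJT]
  have hPMT : P * Mᵀ = 0 := by
    have := congrArg Matrix.transpose hMP
    rwa [Matrix.transpose_mul, hPT, Matrix.transpose_zero] at this
  -- P is idempotent
  have hJJ : J * J = (K : ℝ) • J := by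
    ext i j
    simp [hJ, hu, mul_apply, vecMulVec_apply, Finset.sum_const]
  have hPP : P * P = P := by
    rw [hP, Matrix.sub_mul, Matrix.one_mul, Matrix.mul_sub, Matrix.mul_one,
      Matrix.smul_mul, Matrix.mul_smul, hJJ, smul_smul, smul_smul,
      show (K:ℝ)⁻¹ * (K:ℝ)⁻¹ * (K:ℝ) = (K:ℝ)⁻¹ by field_simp]
    abel
  -- key formula
  have key : ∀ γ α : ℝ, B γ * S α * (B γ)ᵀ
      = (γ ^ 2 / ((K : ℝ) * ((K : ℝ) * α + 1))) • (C * (P * Cᵀ)) := by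
    intro γ α
    set c : ℝ := 1 / ((K : ℝ) * ((K : ℝ) * α + 1)) with hc
    have h1 : B γ * S α = (γ * c) • (C * P) := by
      simp only [hB, hS, ← hc, Matrix.add_mul, Matrix.sub_mul, Matrix.smul_mul,
        Matrix.mul_smul, hMP, smul_zero, sub_zero, add_zero, smul_smul]
      rw [mul_comm]
    have h2 : (B γ)ᵀ = γ • (Cᵀ - Mᵀ) + Mᵀ := by
      rw [hB, Matrix.transpose_add, Matrix.transpose_smul, Matrix.transpose_sub]
    have h3 : (C * P) * Mᵀ = 0 := by rw [Matrix.mul_assoc, hPMT, Matrix.mul_zero]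
    rw [h1, h2, Matrix.smul_mul, Matrix.mul_add, h3, add_zero, Matrix.mul_smul,
      Matrix.mul_sub, h3, sub_zero, Matrix.mul_assoc, smul_smul, hc]
    congr 1
    ring
  -- C * P ≠ 0
  have hCP : C * P ≠ 0 := by
    intro h
    -- then C.mulVec w = 0 for w = e0 - e1
    have hC : C = (K : ℝ)⁻¹ • (C * J) := by
      have h' : C * P = C - (K : ℝ)⁻¹ • (C * J) := by
        rw [hP, Matrix.mul_sub, Matrix.mul_one, Matrix.mul_smul]
      rw [h'] at h
      exact sub_eq_zero.mp h
    -- columns of C are all equal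
    have hcol : ∀ j j' : Fin K, (fun i => C i j) = (fun i => C i j') := by
      intro j j'
      funext i
      have h1 := congrFun (congrFun hC i) j
      have h2 := congrFun (congrFun hC i) j'
      simp only [Matrix.smul_apply, mul_apply, hJ, hu, vecMulVec_apply, mul_one,
        smul_eq_mul] at h1 h2
      rw [h1, h2]
    -- injectivity of mulVecLin from rank
    have hinj : Function.Injective C.mulVecLin := by
      rw [← LinearMap.ker_eq_bot]
      have hft := C.mulVecLin.finrank_range_add_finrank_ker
      rw [show (Module.finrank ℝ (LinearMap.range C.mulVecLin)) = K from hrank,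
        Module.finrank_pi] at hft
      simp only [Fintype.card_fin] at hft
      have : Module.finrank ℝ (LinearMap.ker C.mulVecLin) = 0 := by omega
      exact Submodule.finrank_eq_zero.mp this
    set w : Fin K → ℝ := Pi.single (⟨0, by omega⟩ : Fin K) 1
      - Pi.single (⟨1, by omega⟩ : Fin K) 1 with hw
    have hw0 : C.mulVecLin w = 0 := by
      rw [mulVecLin_apply, hw, Matrix.mulVec_sub, Matrix.mulVec_single_one,
        Matrix.mulVec_single_one]
      have : (fun i => C i (⟨0, by omega⟩ : Fin K)) = fun i => C i (⟨1, by omega⟩ : Fin K) :=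
        hcol _ _
      funext i
      simpa [Matrix.transpose_apply, sub_eq_zero] using congrFun this i
    have hwz : w = 0 := hinj (by simpa using hw0)
    have := congrFun hwz ⟨0, by omega⟩
    rw [hw] at this
    simp [Pi.single_apply, Fin.ext_iff, show (0:ℕ) ≠ 1 by norm_num] at this
  have hN : C * (P * Cᵀ) ≠ 0 := by
    intro h
    apply hCP
    have hfac : C * (P * Cᵀ) = (C * P) * (C * P)ᴴ := by
      rw [Matrix.conjTranspose_eq_transpose_of_trivial, Matrix.transpose_mul, hPT,
        Matrix.mul_assoc, ← Matrix.mul_assoc P P Cᵀ, hPP]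
    rw [hfac] at h
    exact Matrix.self_mul_conjTranspose_eq_zero.mp h
  intro γ₁ γ₂ α₁ α₂ hα₁ hα₂
  rw [key γ₁ α₁, key γ₂ α₂]
  constructor
  · intro h
    by_contra hne
    have : (γ₁ ^ 2 / ((K : ℝ) * ((K : ℝ) * α₁ + 1))
        - γ₂ ^ 2 / ((K : ℝ) * ((K : ℝ) * α₂ + 1))) • (C * (P * Cᵀ)) = 0 := by
      rw [sub_smul, h, sub_self]
    rcases smul_eq_zero.mp this with h' | h'
    · exact hne (by linarith [sub_eq_zero.mp h'])
    · exact hN h'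
  · intro h; rw [h]
end

section
/- Let K ≥ 2, D ≥ 1, let C ∈ ℝ^{D×K} have full column rank, μ ∈ ℝ^D, and let γ : (0,∞) → (0,∞) be a function such that φ(α) = γ(α)²/(K(Kα+1)) is strictly monotone on (0,∞). Define B(γ) = γ(C − μ𝟙_Kᵀ) + μ𝟙_Kᵀ and S(α) = (1/(K(Kα+1)))·(I_K − (1/K)𝟙_K𝟙_Kᵀ). Then the map α ↦ B(γ(α)) S(α) B(γ(α))ᵀ is injective on (0,∞). -/
open Matrix

/-- With `B(γ) = γ(C − μ𝟙ᵀ) + μ𝟙ᵀ` (full-column-rank `C`) and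
`S(α)` the symmetric Dirichlet covariance, if `φ(α) = γ(α)²/(K(Kα+1))` is strictly
monotone on `(0,∞)`, then `α ↦ B(γ(α)) S(α) B(γ(α))ᵀ` is injective on `(0,∞)`. -/
theorem concentration_identifiability_of_strict_monotone
    (K D : ℕ) (hK : 2 ≤ K) (hD : 1 ≤ D)
    (C : Matrix (Fin D) (Fin K) ℝ) (hrank : C.rank = K)
    (μ : Fin D → ℝ)
    (γ : ℝ → ℝ) (hγpos : ∀ α ∈ Set.Ioi (0 : ℝ), 0 < γ α)
    (φ : ℝ → ℝ)
    (hφ : ∀ α : ℝ, φ α = (γ α) ^ 2 / ((K : ℝ) * ((K : ℝ) * α + 1)))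
    (hmono : StrictMonoOn φ (Set.Ioi (0 : ℝ)) ∨ StrictAntiOn φ (Set.Ioi (0 : ℝ)))
    (B : ℝ → Matrix (Fin D) (Fin K) ℝ)
    (hB : ∀ g : ℝ, B g = g • (C - vecMulVec μ (fun _ => (1 : ℝ)))
        + vecMulVec μ (fun _ => (1 : ℝ)))
    (S : ℝ → Matrix (Fin K) (Fin K) ℝ)
    (hS : ∀ α : ℝ, S α = (1 / ((K : ℝ) * ((K : ℝ) * α + 1))) •
        ((1 : Matrix (Fin K) (Fin K) ℝ)
          - (K : ℝ)⁻¹ • vecMulVec (fun _ => (1 : ℝ)) (fun _ => (1 : ℝ)))) :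
    Set.InjOn (fun α : ℝ => B (γ α) * S α * (B (γ α))ᵀ) (Set.Ioi (0 : ℝ)) := by
  have hK0 : (K : ℝ) ≠ 0 := by positivity
  set J : Matrix (Fin K) (Fin K) ℝ := vecMulVec (fun _ => (1:ℝ)) (fun _ => (1:ℝ)) with hJ
  set N : Matrix (Fin D) (Fin K) ℝ := vecMulVec μ (fun _ => (1:ℝ)) with hN
  set M : Matrix (Fin D) (Fin K) ℝ := C - N with hM
  set P : Matrix (Fin K) (Fin K) ℝ := 1 - (K:ℝ)⁻¹ • J with hP
  have hNJ : N * J = (K:ℝ) • N := by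
    ext i j
    simp [hN, hJ, mul_apply, vecMulVec_apply, mul_comm]
  have hJJ : J * J = (K:ℝ) • J := by
    ext i j
    simp [hJ, mul_apply, vecMulVec_apply]
  have hNP : N * P = 0 := by
    rw [hP, Matrix.mul_sub, Matrix.mul_smul, hNJ, Matrix.mul_one, smul_smul,
      inv_mul_cancel₀ hK0, one_smul, sub_self]
  have hPP : P * P = P := by
    have hJP : J * P = 0 := by
      rw [hP, Matrix.mul_sub, Matrix.mul_smul, hJJ, Matrix.mul_one, smul_smul,
        inv_mul_cancel₀ hK0, one_smul, sub_self]
    rw [hP, Matrix.sub_mul, Matrix.smul_mul, hJP, smul_zero, sub_zero, Matrix.one_mul]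
  have hJT : Jᵀ = J := by
    ext i j
    simp [hJ, vecMulVec_apply]
  have hPT : Pᵀ = P := by
    rw [hP, transpose_sub, transpose_one, transpose_smul, hJT]
  have hPNT : P * Nᵀ = 0 := by
    have h := congrArg transpose hNP
    rwa [transpose_mul, hPT, transpose_zero] at h
  set Q : Matrix (Fin D) (Fin D) ℝ := M * P * Mᵀ with hQ
  have key : ∀ α : ℝ, B (γ α) * S α * (B (γ α))ᵀ = φ α • Q := by
    intro α
    rw [hB, hS, hφ]
    rw [Matrix.mul_smul, Matrix.smul_mul, Matrix.add_mul, Matrix.smul_mul, hNP,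
      add_zero, transpose_add, transpose_smul, Matrix.mul_add, Matrix.mul_smul,
      Matrix.smul_mul, Matrix.smul_mul, Matrix.mul_assoc M P Nᵀ, hPNT,
      Matrix.mul_zero, smul_zero, add_zero, smul_smul, smul_smul]
    congr 1
    ring
  have hMP : M * P = C * P := by
    rw [hM, Matrix.sub_mul, hNP, sub_zero]
  have hQC : Q = C * P * Cᵀ := by
    rw [hQ, hMP, hM, transpose_sub, Matrix.mul_sub, Matrix.mul_assoc C P Nᵀ, hPNT,
      Matrix.mul_zero, sub_zero]
  have hQself : Q = (C * P) * (C * P)ᴴ := by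
    rw [conjTranspose_eq_transpose_of_trivial, transpose_mul, hPT, hQC,
      ← Matrix.mul_assoc, Matrix.mul_assoc C P P, hPP]
  have hQne : Q ≠ 0 := by
    intro h0
    have hCP : C * P = 0 := Matrix.self_mul_conjTranspose_eq_zero.mp (hQself ▸ h0)
    have hCeq : C = C * ((K:ℝ)⁻¹ • J) := by
      have h := hCP
      rw [hP, Matrix.mul_sub, Matrix.mul_one, sub_eq_zero] at h
      exact h
    have h1 : C.rank ≤ 1 := by
      calc C.rank = (C * ((K:ℝ)⁻¹ • J)).rank := by rw [← hCeq]
        _ ≤ ((K:ℝ)⁻¹ • J).rank := Matrix.rank_mul_le_right _ _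
        _ = (((K:ℝ)⁻¹ • replicateCol (Fin 1) (fun _ => (1:ℝ))) * replicateRow (Fin 1) (fun _ => (1:ℝ))).rank := by
            rw [hJ, vecMulVec_eq (Fin 1), Matrix.smul_mul]
            rfl
        _ ≤ (replicateRow (Fin 1) (fun _ => (1:ℝ))).rank := Matrix.rank_mul_le_right _ _
        _ ≤ Fintype.card (Fin 1) := Matrix.rank_le_card_height _
        _ = 1 := Fintype.card_fin 1
    rw [hrank] at h1
    omega
  intro a ha b hb hab
  simp only [key] at hab
  have hφab : φ a = φ b := by
    have := sub_eq_zero.mpr hab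
    rw [← sub_smul] at this
    rcases smul_eq_zero.mp this with h | h
    · exact sub_eq_zero.mp h
    · exact absurd h hQne
  rcases hmono with hm | hm
  · exact hm.injOn ha hb hφab
  · exact hm.injOn ha hb hφab
end
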